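/- Let x, z ∈ ℝ² with x ≠ z, let ω ∈ ℝ, and let t, n be an orthonormal pair of vectors in ℝ². Define the complex numbers A = (1/(2π)) ∫₀^{2π} exp(i·ω·⟨θ(s), x − z⟩) ds, B = (√2/(2π)) ∫₀^{2π} ⟨θ(s), t⟩ · exp(i·ω·⟨θ(s), x − z⟩) ds, and C = (√2/(2π)) ∫₀^{2π} ⟨θ(s), n⟩ · exp(i·ω·⟨θ(s), x − z⟩) ds. Then A² + B² + C² = J₀(ω‖x − z‖)² − 2·J₁(ω‖x − z‖)² (an equality of complex numbers whose right-hand side is real); in particular the value of the subspace-migration functional at z for a single contributing point x is J₀(ω‖x − z‖)² − 2·J₁(ω‖x − z‖)². -/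

import Mathlib

open MeasureTheory Real Filter
open scoped RealInnerProductSpace

/-- Bessel function of the first kind of order 0 (Bessel's integral). -/
noncomputable def J0 (u : ℝ) : ℝ := (1 / π) * ∫ τ in (0:ℝ)..π, Real.cos (u * Real.sin τ)

/-- Bessel function of the first kind of order 1 (Bessel's integral). -/
noncomputable def J1 (u : ℝ) : ℝ := (1 / π) * ∫ τ in (0:ℝ)..π, Real.cos (τ - u * Real.sin τ)

/-- The unit direction `θ(s) = (cos s, sin s)` in `ℝ²`. -/
noncomputable def unitDir (s : ℝ) : EuclideanSpace ℝ (Fin 2) := WithLp.toLp 2 ![Real.cos s, Real.sin s]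

/-!
Write `x - z = r • θ(φ)` with `r = ‖x - z‖`. After the rotation `s ↦ s + φ` the phase becomes
`ω r cos s`, and the Bessel integrals `∫₀^{2π} e^{i u cos s} ds = 2π J₀(u)`,
`∫₀^{2π} cos s · e^{i u cos s} ds = 2π i J₁(u)`, `∫₀^{2π} sin s · e^{i u cos s} ds = 0` give
`A = J₀(ωr)`, `B = √2 i J₁(ωr) ⟪θ(φ), t⟫` and `C = √2 i J₁(ωr) ⟪θ(φ), n⟫`. Since `(t, n)` is an
orthonormal basis of `ℝ²`, `⟪θ(φ), t⟫² + ⟪θ(φ), n⟫² = ‖θ(φ)‖² = 1`.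
-/

open intervalIntegral ComplexConjugate

namespace Function.Periodic

variable {E : Type*} [NormedAddCommGroup E] [NormedSpace ℝ E] {f : ℝ → E} {T : ℝ}

theorem intervalIntegral_comp_add_right (hf : Periodic f T) (c : ℝ) :
    ∫ s in 0..T, f (s + c) = ∫ s in 0..T, f s := by
  simpa [add_comm] using hf.intervalIntegral_add_eq c 0

theorem intervalIntegral_comp_neg (hf : Periodic f T) :
    ∫ s in 0..T, f (-s) = ∫ s in 0..T, f s := by
  simpa [intervalIntegral.integral_comp_neg] using hf.intervalIntegral_add_eq (-T) 0

theorem intervalIntegral_eq_zero_of_odd (hf : Periodic f T) (hodd : ∀ s, f (-s) = -f s) :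
    ∫ s in 0..T, f s = 0 := by
  have h := hf.intervalIntegral_comp_neg
  simp only [hodd, intervalIntegral.integral_neg] at h
  have h2 : (2 : ℝ) • ∫ s in 0..T, f s = 0 := by
    rw [two_smul]; nth_rw 1 [← h]; exact neg_add_cancel _
  simpa using h2

end Function.Periodic

theorem integral_neg_self_eq_two_mul_integral_re {h : ℝ → ℂ} (hconj : ∀ τ, h (-τ) = conj (h τ))
    (hcont : Continuous h) (a : ℝ) :
    ∫ τ in -a..a, h τ = 2 * ((∫ τ in 0..a, (h τ).re : ℝ) : ℂ) := by
  have hneg : ∫ τ in -a..0, h τ = conj (∫ τ in 0..a, h τ) := by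
    rw [← intervalIntegral_conj, ← neg_zero, ← intervalIntegral.integral_comp_neg]
    simp [hconj]
  rw [← integral_add_adjacent_intervals (b := 0) (hcont.intervalIntegrable _ _)
    (hcont.intervalIntegrable _ _), hneg, add_comm, Complex.add_conj,
    Complex.ofReal_mul, Complex.ofReal_ofNat]
  exact congrArg _ (congrArg _ (intervalIntegral_re (hcont.intervalIntegrable 0 a)).symm)

theorem integral_exp_mul_I_sub_sin (k : ℤ) (u : ℝ) :
    ∫ τ in 0..2 * π, Complex.exp (↑(k * τ - u * Real.sin τ) * Complex.I) =
      2 * ((∫ τ in 0..π, Real.cos (k * τ - u * Real.sin τ) : ℝ) : ℂ) := by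
  set h : ℝ → ℂ := fun τ ↦ Complex.exp (↑(k * τ - u * Real.sin τ) * Complex.I)
  have hper : Function.Periodic h (2 * π) := by
    intro τ
    convert (Complex.exp_mul_I_periodic.int_mul k) ↑(k * τ - u * Real.sin τ) using 2
    simp only [Real.sin_add_two_pi]
    push_cast
    ring
  have hconj : ∀ τ, h (-τ) = conj (h τ) := by
    intro τ
    simp only [h, ← Complex.exp_conj, map_mul, Complex.conj_ofReal, Complex.conj_I, Real.sin_neg]
    congr 1
    push_cast
    ring
  have hcont : Continuous h := by fun_prop
  calc ∫ τ in 0..2 * π, h τ = ∫ τ in -π..π, h τ := by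
        simpa [two_mul] using hper.intervalIntegral_add_eq 0 (-π)
    _ = _ := by
        rw [integral_neg_self_eq_two_mul_integral_re hconj hcont]
        simp only [h, Complex.exp_ofReal_mul_I_re]

theorem integral_exp_mul_cos (u : ℝ) :
    ∫ s in 0..2 * π, Complex.exp (↑(u * Real.cos s) * Complex.I) = 2 * π * J0 u := by
  have hper : Function.Periodic (fun s ↦ Complex.exp (↑(u * Real.cos s) * Complex.I)) (2 * π) :=
    fun s ↦ by simp only [Real.cos_add_two_pi]
  calc _ = ∫ s in 0..2 * π, Complex.exp (↑(u * Real.cos (s + π / 2)) * Complex.I) :=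
        (hper.intervalIntegral_comp_add_right _).symm
    _ = ∫ τ in 0..2 * π, Complex.exp (↑(((0 : ℤ) : ℝ) * τ - u * Real.sin τ) * Complex.I) :=
        integral_congr fun s _ ↦ by simp only [Real.cos_add_pi_div_two]; push_cast; ring_nf
    _ = 2 * π * J0 u := by
        rw [integral_exp_mul_I_sub_sin, J0]
        simp only [Int.cast_zero, zero_mul, zero_sub, Real.cos_neg]
        push_cast
        field_simp

theorem integral_exp_mul_I_add_cos (u : ℝ) :
    ∫ s in 0..2 * π, Complex.exp (↑(s + u * Real.cos s) * Complex.I) =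
      2 * π * J1 u * Complex.I := by
  have hper : Function.Periodic
      (fun s ↦ Complex.exp (↑(s + u * Real.cos s) * Complex.I)) (2 * π) := by
    intro s
    convert Complex.exp_mul_I_periodic ↑(s + u * Real.cos s) using 2
    simp only [Real.cos_add_two_pi]
    push_cast
    ring
  calc _ = ∫ s in 0..2 * π, Complex.exp (↑(s + π / 2 + u * Real.cos (s + π / 2)) * Complex.I) :=
        (hper.intervalIntegral_comp_add_right _).symm
    _ = ∫ τ in 0..2 * π, Complex.I *
          Complex.exp (↑(((1 : ℤ) : ℝ) * τ - u * Real.sin τ) * Complex.I) := by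
        refine integral_congr fun s _ ↦ ?_
        rw [Real.cos_add_pi_div_two, show s + π / 2 + u * -Real.sin s =
          π / 2 + (((1 : ℤ) : ℝ) * s - u * Real.sin s) by push_cast; ring, Complex.ofReal_add,
          add_mul, Complex.exp_add, Complex.ofReal_div, Complex.ofReal_ofNat,
          Complex.exp_pi_div_two_mul_I]
    _ = 2 * π * J1 u * Complex.I := by
        rw [intervalIntegral.integral_const_mul, integral_exp_mul_I_sub_sin, J1]
        simp only [Int.cast_one, one_mul]
        push_cast
        field_simp

theorem integral_sin_mul_exp_mul_cos (u : ℝ) :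
    ∫ s in 0..2 * π, (Real.sin s : ℂ) * Complex.exp (↑(u * Real.cos s) * Complex.I) = 0 := by
  refine Function.Periodic.intervalIntegral_eq_zero_of_odd (fun s ↦ ?_) (fun s ↦ ?_)
  · simp only [Real.sin_add_two_pi, Real.cos_add_two_pi]
  · simp only [Real.sin_neg, Real.cos_neg]
    push_cast
    ring

theorem integral_cos_mul_exp_mul_cos (u : ℝ) :
    ∫ s in 0..2 * π, (Real.cos s : ℂ) * Complex.exp (↑(u * Real.cos s) * Complex.I) =
      2 * π * J1 u * Complex.I := by
  have hsplit : ∀ s : ℝ, (Real.cos s : ℂ) * Complex.exp (↑(u * Real.cos s) * Complex.I) =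
      Complex.exp (↑(s + u * Real.cos s) * Complex.I) -
        Complex.I * ((Real.sin s : ℂ) * Complex.exp (↑(u * Real.cos s) * Complex.I)) := by
    intro s
    rw [Complex.ofReal_add, add_mul, Complex.exp_add, Complex.exp_mul_I (s : ℂ)]
    push_cast
    ring
  simp_rw [hsplit]
  rw [intervalIntegral.integral_sub (Continuous.intervalIntegrable (by fun_prop) _ _)
      (Continuous.intervalIntegrable (by fun_prop) _ _),
    intervalIntegral.integral_const_mul,
    integral_exp_mul_I_add_cos, integral_sin_mul_exp_mul_cos, mul_zero, sub_zero]

theorem inner_unitDir (s : ℝ) (v : EuclideanSpace ℝ (Fin 2)) :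
    ⟪unitDir s, v⟫ = Real.cos s * v 0 + Real.sin s * v 1 := by
  simp [unitDir, PiLp.inner_apply, Fin.sum_univ_two, mul_comm]

theorem inner_unitDir_unitDir (s φ : ℝ) : ⟪unitDir s, unitDir φ⟫ = Real.cos (s - φ) := by
  rw [inner_unitDir]
  simp [unitDir, Real.cos_sub]

theorem norm_unitDir (φ : ℝ) : ‖unitDir φ‖ = 1 := by
  rw [norm_eq_sqrt_real_inner, inner_unitDir_unitDir, sub_self, Real.cos_zero, Real.sqrt_one]

theorem unitDir_periodic : Function.Periodic unitDir (2 * π) := fun s ↦ by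
  simp [unitDir]

theorem unitDir_add (s φ : ℝ) :
    unitDir (s + φ) = Real.cos s • unitDir φ + Real.sin s • unitDir (φ + π / 2) := by
  ext i
  fin_cases i <;> simp [unitDir, Real.cos_add, Real.sin_add] <;> ring

theorem exists_eq_norm_smul_unitDir (v : EuclideanSpace ℝ (Fin 2)) :
    ∃ φ, v = ‖v‖ • unitDir φ := by
  set c : ℂ := Complex.orthonormalBasisOneI.repr.symm v
  refine ⟨Complex.arg c, ?_⟩
  have hv : v = Complex.orthonormalBasisOneI.repr c :=
    (LinearIsometryEquiv.apply_symm_apply _ v).symm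
  have hnorm : ‖v‖ = ‖c‖ := by rw [hv, LinearIsometryEquiv.norm_map]
  rw [hnorm]
  nth_rw 1 [hv]
  ext i
  fin_cases i <;> simp [unitDir, Complex.norm_mul_cos_arg, Complex.norm_mul_sin_arg]

theorem inner_sq_add_inner_sq_eq_norm_sq {E : Type*} [NormedAddCommGroup E]
    [InnerProductSpace ℝ E] (hE : Module.finrank ℝ E = 2) {t n : E} (ht : ‖t‖ = 1)
    (hn : ‖n‖ = 1) (htn : ⟪t, n⟫ = 0) (v : E) :
    ⟪v, t⟫ ^ 2 + ⟪v, n⟫ ^ 2 = ‖v‖ ^ 2 := by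
  have hon : Orthonormal ℝ ![t, n] := by
    rw [orthonormal_iff_ite]
    intro i j
    fin_cases i <;> fin_cases j <;> simp [ht, hn, htn, real_inner_comm t n]
  have : FiniteDimensional ℝ E := Module.finite_of_finrank_eq_succ hE
  let b := (basisOfOrthonormalOfCardEqFinrank hon (by simp [hE])).toOrthonormalBasis
    (by simpa using hon)
  have := b.sum_inner_mul_inner v v
  simp [b, Fin.sum_univ_two, real_inner_comm v] at this
  linear_combination this

theorem integral_exp_inner_unitDir (ω r φ : ℝ) :
    ∫ s in 0..2 * π, Complex.exp (Complex.I * ω * ((⟪unitDir s, r • unitDir φ⟫ : ℝ) : ℂ)) =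
      2 * π * J0 (ω * r) := by
  have hper : Function.Periodic
      (fun s ↦ Complex.exp (Complex.I * ω * ((⟪unitDir s, r • unitDir φ⟫ : ℝ) : ℂ))) (2 * π) :=
    fun s ↦ by simp only [unitDir_periodic s]
  rw [← hper.intervalIntegral_comp_add_right φ, ← integral_exp_mul_cos]
  refine integral_congr fun s _ ↦ ?_
  simp only [inner_smul_right, inner_unitDir_unitDir, add_sub_cancel_right]
  push_cast
  ring_nf

theorem integral_inner_mul_exp_inner_unitDir (ω r φ : ℝ) (v : EuclideanSpace ℝ (Fin 2)) :
    ∫ s in 0..2 * π, ((⟪unitDir s, v⟫ : ℝ) : ℂ) *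
        Complex.exp (Complex.I * ω * ((⟪unitDir s, r • unitDir φ⟫ : ℝ) : ℂ)) =
      2 * π * J1 (ω * r) * ⟪unitDir φ, v⟫ * Complex.I := by
  have hper : Function.Periodic (fun s ↦ ((⟪unitDir s, v⟫ : ℝ) : ℂ) *
      Complex.exp (Complex.I * ω * ((⟪unitDir s, r • unitDir φ⟫ : ℝ) : ℂ))) (2 * π) :=
    fun s ↦ by simp only [unitDir_periodic s]
  set E : ℝ → ℂ := fun s ↦ Complex.exp (↑(ω * r * Real.cos s) * Complex.I)
  have hsplit : ∀ s, ((⟪unitDir (s + φ), v⟫ : ℝ) : ℂ) *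
      Complex.exp (Complex.I * ω * ((⟪unitDir (s + φ), r • unitDir φ⟫ : ℝ) : ℂ)) =
      ⟪unitDir φ, v⟫ * ((Real.cos s : ℂ) * E s) +
        ⟪unitDir (φ + π / 2), v⟫ * ((Real.sin s : ℂ) * E s) := by
    intro s
    rw [inner_smul_right, inner_unitDir_unitDir, add_sub_cancel_right, unitDir_add,
      inner_add_left, real_inner_smul_left, real_inner_smul_left]
    simp only [E]
    push_cast
    ring_nf
  rw [← hper.intervalIntegral_comp_add_right φ]
  simp_rw [hsplit]
  rw [intervalIntegral.integral_add (Continuous.intervalIntegrable (by fun_prop) _ _)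
      (Continuous.intervalIntegrable (by fun_prop) _ _),
    intervalIntegral.integral_const_mul, intervalIntegral.integral_const_mul,
    integral_cos_mul_exp_mul_cos, integral_sin_mul_exp_mul_cos]
  ring

theorem subspace_migration_single_point_general (x z : EuclideanSpace ℝ (Fin 2))
    (ω : ℝ) (t n : EuclideanSpace ℝ (Fin 2))
    (ht : ‖t‖ = 1) (hn : ‖n‖ = 1) (htn : (⟪t, n⟫ : ℝ) = 0)
    (A B C : ℂ)
    (hA : A = (1 / (2 * (π : ℂ))) *
        ∫ s in (0:ℝ)..(2 * π),
          Complex.exp (Complex.I * (ω : ℂ) * ((⟪unitDir s, x - z⟫ : ℝ) : ℂ)))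
    (hB : B = ((Real.sqrt 2 : ℝ) : ℂ) / (2 * (π : ℂ)) *
        ∫ s in (0:ℝ)..(2 * π),
          ((⟪unitDir s, t⟫ : ℝ) : ℂ) *
            Complex.exp (Complex.I * (ω : ℂ) * ((⟪unitDir s, x - z⟫ : ℝ) : ℂ)))
    (hC : C = ((Real.sqrt 2 : ℝ) : ℂ) / (2 * (π : ℂ)) *
        ∫ s in (0:ℝ)..(2 * π),
          ((⟪unitDir s, n⟫ : ℝ) : ℂ) *
            Complex.exp (Complex.I * (ω : ℂ) * ((⟪unitDir s, x - z⟫ : ℝ) : ℂ))) :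
    A ^ 2 + B ^ 2 + C ^ 2 =
      ((J0 (ω * ‖x - z‖) ^ 2 - 2 * J1 (ω * ‖x - z‖) ^ 2 : ℝ) : ℂ) := by
  obtain ⟨φ, hφ⟩ := exists_eq_norm_smul_unitDir (x - z)
  rw [hφ, integral_exp_inner_unitDir] at hA
  rw [hφ, integral_inner_mul_exp_inner_unitDir] at hB hC
  have hparseval := inner_sq_add_inner_sq_eq_norm_sq finrank_euclideanSpace_fin ht hn htn
    (unitDir φ)
  rw [norm_unitDir, one_pow] at hparseval
  replace hparseval : (⟪unitDir φ, t⟫ : ℂ) ^ 2 + (⟪unitDir φ, n⟫ : ℂ) ^ 2 = 1 := by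
    exact_mod_cast hparseval
  have hsqrt : ((√2 : ℝ) : ℂ) ^ 2 = 2 := by exact_mod_cast Real.sq_sqrt zero_le_two
  subst hA hB hC
  field_simp
  push_cast
  rw [hsqrt, Complex.I_sq]
  linear_combination (-2 * (J1 (ω * ‖x - z‖) : ℂ) ^ 2) * hparseval

/-- The single-frequency subspace-migration value at `z` for a single contributing point `x`:
with `A`, `B`, `C` the (suitably normalized) circular means, `A² + B² + C²` equals
`J₀(ω‖x − z‖)² − 2 J₁(ω‖x − z‖)²`. -/
theorem subspace_migration_single_point (x z : EuclideanSpace ℝ (Fin 2)) (hxz : x ≠ z)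
    (ω : ℝ) (t n : EuclideanSpace ℝ (Fin 2))
    (ht : ‖t‖ = 1) (hn : ‖n‖ = 1) (htn : (⟪t, n⟫ : ℝ) = 0)
    (A B C : ℂ)
    (hA : A = (1 / (2 * (π : ℂ))) *
        ∫ s in (0:ℝ)..(2 * π),
          Complex.exp (Complex.I * (ω : ℂ) * ((⟪unitDir s, x - z⟫ : ℝ) : ℂ)))
    (hB : B = ((Real.sqrt 2 : ℝ) : ℂ) / (2 * (π : ℂ)) *
        ∫ s in (0:ℝ)..(2 * π),
          ((⟪unitDir s, t⟫ : ℝ) : ℂ) *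
            Complex.exp (Complex.I * (ω : ℂ) * ((⟪unitDir s, x - z⟫ : ℝ) : ℂ)))
    (hC : C = ((Real.sqrt 2 : ℝ) : ℂ) / (2 * (π : ℂ)) *
        ∫ s in (0:ℝ)..(2 * π),
          ((⟪unitDir s, n⟫ : ℝ) : ℂ) *
            Complex.exp (Complex.I * (ω : ℂ) * ((⟪unitDir s, x - z⟫ : ℝ) : ℂ))) :
    A ^ 2 + B ^ 2 + C ^ 2 =
      ((J0 (ω * ‖x - z‖) ^ 2 - 2 * J1 (ω * ‖x - z‖) ^ 2 : ℝ) : ℂ) :=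
  subspace_migration_single_point_general x z ω t n ht hn htn A B C hA hB hC
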